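/- arXiv:2408.10941 — 2 statements merged into one kernel-verified Lean document; each statement's English description precedes it below -/
import Mathlib

section
/- Let k_ρ, λ > 0 and define K : ℝ² → ℝ² by K(α, φ) := (−λ k_ρ (1 − sinc(2α)) φ, k_ρ (1 − sinc(2α)) α). Then for every r > 0 there exists a constant c > 0 such that for all (α, φ) ∈ ℝ² with ‖(α, φ)‖ ≤ r, one has ‖K(α, φ)‖ ≤ c · ‖(α, φ)‖ · |α|. -/
/-!
Since `1 - sinc s = (s - sin s) / s` and `|s - sin s| ≤ |s|³ / 6`, the factor `1 - sinc (2α)` is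
`O(α²)` near `0`; being bounded by `2` everywhere, it is `O(|α|)` on all of `ℝ`. The remaining
factors of `K(α, φ)` are linear in `(α, φ)`.
-/

open Real

/-- `sinc s = sin s / s` for `s ≠ 0`, and `sinc 0 = 1`. -/
noncomputable def sinc (s : ℝ) : ℝ := if s = 0 then 1 else Real.sin s / s

lemma sinc_eq_real_sinc : _root_.sinc = Real.sinc := rfl

namespace Real

lemma abs_one_sub_sinc_le_sq_div_six (x : ℝ) : |1 - sinc x| ≤ x ^ 2 / 6 := by
  rcases eq_or_ne x 0 with rfl | hx
  · simp
  have hx' : 0 < |x| := abs_pos.mpr hx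
  calc |1 - sinc x| = |x - sin x| / |x| := by
        rw [sinc_of_ne_zero hx, one_sub_div hx, abs_div]
    _ ≤ |x| ^ 3 / 6 / |x| := by gcongr; exact abs_sub_sin_le x
    _ = x ^ 2 / 6 := by field_simp; rw [sq_abs]

lemma abs_one_sub_sinc_le_abs (x : ℝ) : |1 - sinc x| ≤ |x| := by
  rcases le_or_gt |x| 2 with hx | hx
  · calc |1 - sinc x| ≤ x ^ 2 / 6 := abs_one_sub_sinc_le_sq_div_six x
      _ = |x| * |x| / 6 := by rw [abs_mul_abs_self]; ring
      _ ≤ |x| := by nlinarith [abs_nonneg x]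
  · calc |1 - sinc x| ≤ |1| + |sinc x| := abs_sub _ _
      _ ≤ 1 + 1 := by rw [abs_one]; linarith [abs_sinc_le_one x]
      _ ≤ |x| := by linarith

lemma sqrt_mul_sq_add_mul_sq (t x y : ℝ) :
    √((t * x) ^ 2 + (t * y) ^ 2) = |t| * √(x ^ 2 + y ^ 2) := by
  rw [← sqrt_sq_eq_abs, ← sqrt_mul (sq_nonneg t)]
  ring_nf

lemma sqrt_mul_sq_add_sq_le (a x y : ℝ) :
    √((a * x) ^ 2 + y ^ 2) ≤ max 1 |a| * √(y ^ 2 + x ^ 2) := by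
  have ha : a ^ 2 ≤ max 1 |a| ^ 2 := by
    rw [← sq_abs]; gcongr; exact le_max_right _ _
  have h1 : 1 ≤ max 1 |a| ^ 2 := one_le_pow₀ (le_max_left _ _)
  rw [← abs_of_pos (lt_of_lt_of_le one_pos (le_max_left 1 |a|)), ← sqrt_sq_eq_abs,
    ← sqrt_mul (sq_nonneg _)]
  gcongr
  nlinarith [sq_nonneg x, sq_nonneg y]

end Real

theorem output_injection_bound_general
    (kρ lam : ℝ) (hkρ : 0 < kρ)
    (K : ℝ → ℝ → ℝ × ℝ)
    (hK : ∀ α φ : ℝ,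
      K α φ = (-lam * kρ * (1 - _root_.sinc (2 * α)) * φ, kρ * (1 - _root_.sinc (2 * α)) * α)) :
    ∀ r > (0 : ℝ), ∃ c > (0 : ℝ), ∀ α φ : ℝ,
      Real.sqrt (α ^ 2 + φ ^ 2) ≤ r →
        Real.sqrt ((K α φ).1 ^ 2 + (K α φ).2 ^ 2)
          ≤ c * Real.sqrt (α ^ 2 + φ ^ 2) * |α| := by
  intro r _
  refine ⟨2 * kρ * max 1 |lam|, by positivity, fun α φ _ => ?_⟩
  set d := 1 - Real.sinc (2 * α)
  have hd : |d| ≤ 2 * |α| := by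
    simpa [abs_mul] using Real.abs_one_sub_sinc_le_abs (2 * α)
  calc √((K α φ).1 ^ 2 + (K α φ).2 ^ 2) = |kρ * d| * √((lam * φ) ^ 2 + α ^ 2) := by
        rw [hK, sinc_eq_real_sinc, ← Real.sqrt_mul_sq_add_mul_sq]
        congr 1
        ring
    _ ≤ (kρ * (2 * |α|)) * (max 1 |lam| * √(α ^ 2 + φ ^ 2)) := by
        rw [abs_mul, abs_of_pos hkρ]
        gcongr
        exact Real.sqrt_mul_sq_add_sq_le lam φ α
    _ = 2 * kρ * max 1 |lam| * √(α ^ 2 + φ ^ 2) * |α| := by ring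

/-- The output-injection term
`K(α, φ) = (-λ k_ρ (1 - sinc(2α)) φ, k_ρ (1 - sinc(2α)) α)` satisfies, on every
ball of radius `r` (in the Euclidean norm), the bound `‖K(α,φ)‖ ≤ c ‖(α,φ)‖ |α|`
for some constant `c > 0`. -/
theorem output_injection_bound
    (kρ lam : ℝ) (hkρ : 0 < kρ) (hlam : 0 < lam)
    (K : ℝ → ℝ → ℝ × ℝ)
    (hK : ∀ α φ : ℝ,
      K α φ = (-lam * kρ * (1 - _root_.sinc (2 * α)) * φ, kρ * (1 - _root_.sinc (2 * α)) * α)) :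
    ∀ r > (0 : ℝ), ∃ c > (0 : ℝ), ∀ α φ : ℝ,
      Real.sqrt (α ^ 2 + φ ^ 2) ≤ r →
        Real.sqrt ((K α φ).1 ^ 2 + (K α φ).2 ^ 2)
          ≤ c * Real.sqrt (α ^ 2 + φ ^ 2) * |α| :=
  output_injection_bound_general kρ lam hkρ K hK
end

section
/- Let k_ρ, k_α, λ > 0, let f(ρ, φ, α) = (−k_ρ cos²(α) ρ, −k_ρ sinc(2α) α, −k_α α + λ k_ρ sinc(2α) φ) be the nominal closed-loop kinematics, let A = [[−k_α, λ k_ρ], [−k_ρ, 0]], and let P be symmetric positive definite with AᵀP + PA = −I. Let r > 0 and c > 0 be such that ‖K(α, φ)‖ ≤ c‖(α, φ)‖|α| whenever ‖(α, φ)‖ ≤ r, where K(α, φ) := (−λ k_ρ (1 − sinc(2α)) φ, k_ρ (1 − sinc(2α)) α). Set ν := 2 c² r² λ_M(P)²/k_α and define V(ρ, φ, α) := ν · ½(ρ² + λφ² + α²) + (α, φ)ᵀP(α, φ). Then V is a strict Lyapunov function for f on the ball B_r = {(ρ, φ, α) : ‖(ρ, φ, α)‖ ≤ r}: V is positive definite,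 and for all (ρ, φ, α) ∈ B_r, ∇V(ρ, φ, α) · f(ρ, φ, α) ≤ −ν k_ρ cos²(α) ρ² − ½‖(α, φ)‖², so the derivative of V along f is negative definite on B_r. -/
/-!
Write `x = (α, φ)`. Along the kinematics the sinc terms cancel in the derivative of
`½(ρ² + λφ² + α²)`, which is therefore `-k_ρ cos²α ρ² - k_α α²`. The angular part satisfies
`ẋ = A x + K(α, φ)`, so the Lyapunov equation turns the derivative of `xᵀPx` into
`-‖x‖² + 2 xᵀP K`. Young's inequality for the form `P`, together with `yᵀPy ≤ λ_M ‖y‖²`,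
bounds the cross term by `½‖x‖² + 2λ_M²‖K‖² ≤ ½‖x‖² + ν k_α α²` on `B_r`, and the last term is
absorbed by the `-ν k_α α²` coming from the first part of `V`.
-/

open Real Matrix

namespace Matrix

variable {n : Type*} [Fintype n] {P : Matrix n n ℝ}

theorem IsSymm.dotProduct_mulVec_comm (hP : P.IsSymm) (x y : n → ℝ) :
    y ⬝ᵥ P *ᵥ x = x ⬝ᵥ P *ᵥ y := by
  rw [dotProduct_mulVec, dotProduct_comm, ← mulVec_transpose, hP.eq]

theorem PosSemidef.two_mul_dotProduct_mulVec_le (hP : P.PosSemidef) {ε : ℝ} (hε : 0 < ε)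
    (x y : n → ℝ) :
    2 * (x ⬝ᵥ P *ᵥ y) ≤ ε * (x ⬝ᵥ P *ᵥ x) + ε⁻¹ * (y ⬝ᵥ P *ᵥ y) := by
  have h := hP.dotProduct_mulVec_nonneg (ε • x - y)
  simp only [star_trivial, mulVec_sub, mulVec_smul, dotProduct_sub, sub_dotProduct,
    smul_dotProduct, dotProduct_smul, smul_eq_mul,
    (isHermitian_iff_isSymm.mp hP.isHermitian).dotProduct_mulVec_comm x y] at h
  refine le_of_mul_le_mul_left ?_ hε
  rw [mul_add, ← mul_assoc ε ε⁻¹, mul_inv_cancel₀ hε.ne', one_mul]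
  linarith

theorem IsHermitian.dotProduct_mulVec_le_of_mem_upperBounds [DecidableEq n] (hP : P.IsHermitian)
    {lM : ℝ} (hlM : lM ∈ upperBounds (spectrum ℝ P)) (x : n → ℝ) :
    x ⬝ᵥ P *ᵥ x ≤ lM * (x ⬝ᵥ x) := by
  have hgap : (algebraMap ℝ (Matrix n n ℝ) lM - P).PosSemidef := by
    refine posSemidef_iff_isHermitian_and_spectrum_nonneg.mpr ⟨?_, ?_⟩
    · rw [algebraMap_eq_diagonal]
      exact (isHermitian_diagonal _).sub hP
    · rw [← spectrum.singleton_sub_eq]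
      rintro _ ⟨_, rfl, μ, hμ, rfl⟩
      exact sub_nonneg.mpr (hlM hμ)
  have h := hgap.dotProduct_mulVec_nonneg x
  simp only [star_trivial, sub_mulVec, dotProduct_sub, Algebra.algebraMap_eq_smul_one,
    smul_mulVec, one_mulVec, dotProduct_smul, smul_eq_mul] at h
  linarith

theorem PosSemidef.two_mul_dotProduct_mulVec_le_of_mem_upperBounds [DecidableEq n]
    (hP : P.PosSemidef) {lM : ℝ} (hlM : lM ∈ upperBounds (spectrum ℝ P)) (hlM_pos : 0 < lM)
    (x y : n → ℝ) :
    2 * (x ⬝ᵥ P *ᵥ y) ≤ 1 / 2 * (x ⬝ᵥ x) + 2 * lM ^ 2 * (y ⬝ᵥ y) := by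
  have hε : 0 < (2 * lM)⁻¹ := by positivity
  calc 2 * (x ⬝ᵥ P *ᵥ y)
      ≤ (2 * lM)⁻¹ * (x ⬝ᵥ P *ᵥ x) + (2 * lM)⁻¹⁻¹ * (y ⬝ᵥ P *ᵥ y) :=
        hP.two_mul_dotProduct_mulVec_le hε x y
    _ ≤ (2 * lM)⁻¹ * (lM * (x ⬝ᵥ x)) + (2 * lM)⁻¹⁻¹ * (lM * (y ⬝ᵥ y)) := by
        gcongr <;> exact hP.isHermitian.dotProduct_mulVec_le_of_mem_upperBounds hlM _
    _ = 1 / 2 * (x ⬝ᵥ x) + 2 * lM ^ 2 * (y ⬝ᵥ y) := by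
        field_simp

theorem PosDef.pos_of_mem_upperBounds_spectrum [DecidableEq n] [Nonempty n] (hP : P.PosDef)
    {lM : ℝ} (hlM : lM ∈ upperBounds (spectrum ℝ P)) : 0 < lM :=
  let i := Classical.arbitrary n
  (hP.eigenvalues_pos i).trans_le (hlM (hP.isHermitian.eigenvalues_mem_spectrum_real i))

theorem dotProduct_mulVec_add_of_lyapunov_eq [DecidableEq n] {A : Matrix n n ℝ}
    (hLyap : Aᵀ * P + P * A = -1) (x : n → ℝ) :
    x ⬝ᵥ P *ᵥ (A *ᵥ x) + (A *ᵥ x) ⬝ᵥ P *ᵥ x = -(x ⬝ᵥ x) := by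
  have hswap : (A *ᵥ x) ⬝ᵥ P *ᵥ x = x ⬝ᵥ (Aᵀ * P) *ᵥ x := by
    rw [← mulVec_mulVec, dotProduct_mulVec x Aᵀ, vecMul_transpose]
  rw [hswap, mulVec_mulVec, ← dotProduct_add, ← add_mulVec, add_comm, hLyap, neg_mulVec,
    one_mulVec, dotProduct_neg]

end Matrix

theorem HasLineDerivAt.of_forall_add_smul_eq {E : Type*} [NormedAddCommGroup E]
    [NormedSpace ℝ E] {F : E → ℝ} {p w : E} {a b c : ℝ}
    (h : ∀ t : ℝ, F (p + t • w) = a + b * t + c * t ^ 2) :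
    HasLineDerivAt ℝ F b p w := by
  have hpoly : HasDerivAt (fun t : ℝ => a + b * t + c * t ^ 2) b 0 := by
    have := (((hasDerivAt_id (0 : ℝ)).const_mul b).const_add a).fun_add
      (((hasDerivAt_id (0 : ℝ)).pow 2).const_mul c)
    simpa using this
  unfold HasLineDerivAt
  simpa only [h] using hpoly

def angles : ℝ × ℝ × ℝ →L[ℝ] Fin 2 → ℝ :=
  .pi ![.snd ℝ ℝ ℝ ∘L .snd ℝ ℝ (ℝ × ℝ), .fst ℝ ℝ ℝ ∘L .snd ℝ ℝ (ℝ × ℝ)]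

@[simp]
theorem angles_apply (p : ℝ × ℝ × ℝ) : angles p = ![p.2.2, p.2.1] := by
  ext i
  fin_cases i <;> rfl

noncomputable def kinematics (kρ kα lam : ℝ) (p : ℝ × ℝ × ℝ) : ℝ × ℝ × ℝ :=
  (-kρ * Real.cos p.2.2 ^ 2 * p.1,
   -kρ * _root_.sinc (2 * p.2.2) * p.2.2,
   -kα * p.2.2 + lam * kρ * _root_.sinc (2 * p.2.2) * p.2.1)

-- The paper's `K(α, φ)`.
noncomputable def sincPerturbation (kρ lam α φ : ℝ) : Fin 2 → ℝ :=
  ![-lam * kρ * (1 - _root_.sinc (2 * α)) * φ, kρ * (1 - _root_.sinc (2 * α)) * α]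

noncomputable def lyapunovCandidate (ν lam : ℝ) (P : Matrix (Fin 2) (Fin 2) ℝ)
    (p : ℝ × ℝ × ℝ) : ℝ :=
  ν * ((p.1 ^ 2 + lam * p.2.1 ^ 2 + p.2.2 ^ 2) / 2) + angles p ⬝ᵥ P *ᵥ angles p

theorem angles_kinematics (kρ kα lam : ℝ) (p : ℝ × ℝ × ℝ) :
    angles (kinematics kρ kα lam p)
      = !![-kα, lam * kρ; -kρ, 0] *ᵥ angles p + sincPerturbation kρ lam p.2.2 p.2.1 := by
  ext i
  fin_cases i <;> simp [kinematics, sincPerturbation] <;> ring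

theorem kinematics_weighted_inner (kρ kα lam : ℝ) (p : ℝ × ℝ × ℝ) :
    p.1 * (kinematics kρ kα lam p).1 + lam * p.2.1 * (kinematics kρ kα lam p).2.1
        + p.2.2 * (kinematics kρ kα lam p).2.2
      = -kρ * Real.cos p.2.2 ^ 2 * p.1 ^ 2 - kα * p.2.2 ^ 2 := by
  simp only [kinematics]
  ring

theorem sincPerturbation_dotProduct_self_le {kρ lam α φ c r : ℝ}
    (hball : α ^ 2 + φ ^ 2 ≤ r ^ 2)
    (hK : √((-lam * kρ * (1 - _root_.sinc (2 * α)) * φ) ^ 2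
        + (kρ * (1 - _root_.sinc (2 * α)) * α) ^ 2) ≤ c * √(α ^ 2 + φ ^ 2) * |α|) :
    sincPerturbation kρ lam α φ ⬝ᵥ sincPerturbation kρ lam α φ ≤ c ^ 2 * r ^ 2 * α ^ 2 := by
  have hrhs : (c * √(α ^ 2 + φ ^ 2) * |α|) ^ 2 = c ^ 2 * (α ^ 2 + φ ^ 2) * α ^ 2 := by
    rw [mul_pow, mul_pow, Real.sq_sqrt (by positivity), sq_abs]
  calc sincPerturbation kρ lam α φ ⬝ᵥ sincPerturbation kρ lam α φ
      = (-lam * kρ * (1 - _root_.sinc (2 * α)) * φ) ^ 2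
        + (kρ * (1 - _root_.sinc (2 * α)) * α) ^ 2 := by
        simp [sincPerturbation, dotProduct, Fin.sum_univ_two, sq]
    _ ≤ c ^ 2 * (α ^ 2 + φ ^ 2) * α ^ 2 := hrhs ▸ (Real.sqrt_le_iff.mp hK).2
    _ ≤ c ^ 2 * r ^ 2 * α ^ 2 := by gcongr

section lyapunovCandidate

variable {ν lam : ℝ} {P : Matrix (Fin 2) (Fin 2) ℝ}

theorem differentiable_lyapunovCandidate : Differentiable ℝ (lyapunovCandidate ν lam P) := by
  unfold lyapunovCandidate
  simp only [dotProduct, mulVec]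
  fun_prop

theorem fderiv_lyapunovCandidate_apply (hP : P.IsSymm) (p w : ℝ × ℝ × ℝ) :
    fderiv ℝ (lyapunovCandidate ν lam P) p w
      = ν * (p.1 * w.1 + lam * p.2.1 * w.2.1 + p.2.2 * w.2.2)
        + 2 * (angles p ⬝ᵥ P *ᵥ angles w) := by
  refine (differentiable_lyapunovCandidate p |>.hasFDerivAt.hasLineDerivAt w).unique ?_
  refine HasLineDerivAt.of_forall_add_smul_eq (a := lyapunovCandidate ν lam P p)
    (c := lyapunovCandidate ν lam P w) fun t => ?_
  simp only [lyapunovCandidate, map_add, map_smul, mulVec_add, mulVec_smul, add_dotProduct,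
    dotProduct_add, smul_dotProduct, dotProduct_smul, smul_eq_mul, Prod.fst_add, Prod.snd_add,
    Prod.smul_fst, Prod.smul_snd, hP.dotProduct_mulVec_comm (angles p) (angles w)]
  ring

theorem lyapunovCandidate_pos (hν : 0 < ν) (hlam : 0 < lam) (hP : P.PosSemidef)
    {p : ℝ × ℝ × ℝ} (hp : p ≠ 0) : 0 < lyapunovCandidate ν lam P p := by
  obtain ⟨ρ, φ, α⟩ := p
  have hcoord : ρ ≠ 0 ∨ φ ≠ 0 ∨ α ≠ 0 := by
    contrapose! hp
    obtain ⟨rfl, rfl, rfl⟩ := hp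
    rfl
  have hsum : 0 < ρ ^ 2 + lam * φ ^ 2 + α ^ 2 := by
    rcases hcoord with h | h | h <;> positivity
  have hQ := hP.dotProduct_mulVec_nonneg (angles (ρ, φ, α))
  rw [star_trivial] at hQ
  exact add_pos_of_pos_of_nonneg (by positivity) hQ

theorem fderiv_lyapunovCandidate_kinematics_le {kρ kα lM c r : ℝ} (hP : P.PosSemidef)
    (hLyap : (!![-kα, lam * kρ; -kρ, 0])ᵀ * P + P * !![-kα, lam * kρ; -kρ, 0] = -1)
    (hlM : lM ∈ upperBounds (spectrum ℝ P)) (hlM_pos : 0 < lM)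
    (hν : 2 * c ^ 2 * r ^ 2 * lM ^ 2 ≤ ν * kα) {p : ℝ × ℝ × ℝ}
    (hK : sincPerturbation kρ lam p.2.2 p.2.1 ⬝ᵥ sincPerturbation kρ lam p.2.2 p.2.1
      ≤ c ^ 2 * r ^ 2 * p.2.2 ^ 2) :
    fderiv ℝ (lyapunovCandidate ν lam P) p (kinematics kρ kα lam p)
      ≤ -ν * kρ * Real.cos p.2.2 ^ 2 * p.1 ^ 2 - 1 / 2 * (p.2.2 ^ 2 + p.2.1 ^ 2) := by
  set x := angles p
  set K := sincPerturbation kρ lam p.2.2 p.2.1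
  have hsymm : P.IsSymm := isHermitian_iff_isSymm.mp hP.isHermitian
  have hx : x ⬝ᵥ x = p.2.2 ^ 2 + p.2.1 ^ 2 := by
    simp [x, dotProduct, Fin.sum_univ_two, sq]
  have hlin : 2 * (x ⬝ᵥ P *ᵥ (!![-kα, lam * kρ; -kρ, 0] *ᵥ x)) = -(x ⬝ᵥ x) := by
    rw [two_mul]
    nth_rewrite 2 [← hsymm.dotProduct_mulVec_comm]
    exact dotProduct_mulVec_add_of_lyapunov_eq hLyap x
  have hpert := hP.two_mul_dotProduct_mulVec_le_of_mem_upperBounds hlM hlM_pos x K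
  have hKν : 2 * lM ^ 2 * (K ⬝ᵥ K) ≤ ν * kα * p.2.2 ^ 2 :=
    calc 2 * lM ^ 2 * (K ⬝ᵥ K) ≤ 2 * lM ^ 2 * (c ^ 2 * r ^ 2 * p.2.2 ^ 2) := by gcongr
      _ = 2 * c ^ 2 * r ^ 2 * lM ^ 2 * p.2.2 ^ 2 := by ring
      _ ≤ ν * kα * p.2.2 ^ 2 := by gcongr
  rw [fderiv_lyapunovCandidate_apply hsymm, kinematics_weighted_inner, angles_kinematics,
    mulVec_add, dotProduct_add]
  linarith

end lyapunovCandidate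

theorem neg_mul_cos_sq_sub_half_neg {ν kρ ρ φ α : ℝ} (hν : 0 < ν) (hkρ : 0 < kρ)
    (hp : (ρ, φ, α) ≠ 0) :
    -ν * kρ * Real.cos α ^ 2 * ρ ^ 2 - 1 / 2 * (α ^ 2 + φ ^ 2) < 0 := by
  by_cases hx : α = 0 ∧ φ = 0
  · obtain ⟨rfl, rfl⟩ := hx
    have hρ : ρ ≠ 0 := by simpa [Prod.ext_iff] using hp
    have : 0 < ρ ^ 2 := by positivity
    simp only [Real.cos_zero]
    nlinarith [mul_pos (mul_pos hν hkρ) this]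
  · have : 0 < α ^ 2 + φ ^ 2 := by
      rcases not_and_or.mp hx with h | h <;> positivity
    nlinarith [mul_nonneg (mul_nonneg hν.le hkρ.le)
      (mul_nonneg (sq_nonneg (Real.cos α)) (sq_nonneg ρ))]

theorem strict_Lyapunov_kinematics_general
    (kρ kα lam : ℝ) (hkρ : 0 < kρ) (hkα : 0 < kα) (hlam : 0 < lam)
    (f : ℝ × ℝ × ℝ → ℝ × ℝ × ℝ)
    (hf : ∀ p : ℝ × ℝ × ℝ,
      f p = (-kρ * Real.cos p.2.2 ^ 2 * p.1,
             -kρ * _root_.sinc (2 * p.2.2) * p.2.2,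
             -kα * p.2.2 + lam * kρ * _root_.sinc (2 * p.2.2) * p.2.1))
    (A : Matrix (Fin 2) (Fin 2) ℝ)
    (hA : A = Matrix.of ![![-kα, lam * kρ], ![-kρ, 0]])
    (P : Matrix (Fin 2) (Fin 2) ℝ)
    (hPpos : P.PosDef)
    (hLyap : Aᵀ * P + P * A = -(1 : Matrix (Fin 2) (Fin 2) ℝ))
    (lM : ℝ) (hlM : IsGreatest (spectrum ℝ P) lM)
    (r c : ℝ) (hr : 0 < r) (hc : 0 < c)
    (hKbound : ∀ α φ : ℝ, Real.sqrt (α ^ 2 + φ ^ 2) ≤ r →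
      Real.sqrt ((-lam * kρ * (1 - _root_.sinc (2 * α)) * φ) ^ 2
          + (kρ * (1 - _root_.sinc (2 * α)) * α) ^ 2)
        ≤ c * Real.sqrt (α ^ 2 + φ ^ 2) * |α|)
    (ν : ℝ) (hν : ν = 2 * c ^ 2 * r ^ 2 * lM ^ 2 / kα)
    (V : ℝ × ℝ × ℝ → ℝ)
    (hV : ∀ p : ℝ × ℝ × ℝ,
      V p = ν * ((p.1 ^ 2 + lam * p.2.1 ^ 2 + p.2.2 ^ 2) / 2)
        + ![p.2.2, p.2.1] ⬝ᵥ P.mulVec ![p.2.2, p.2.1]) :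
    (V (0, 0, 0) = 0 ∧ ∀ p : ℝ × ℝ × ℝ, p ≠ (0, 0, 0) → 0 < V p) ∧
    (∀ p : ℝ × ℝ × ℝ, Real.sqrt (p.1 ^ 2 + p.2.1 ^ 2 + p.2.2 ^ 2) ≤ r →
      fderiv ℝ V p (f p)
        ≤ -ν * kρ * Real.cos p.2.2 ^ 2 * p.1 ^ 2
          - (1 / 2) * (p.2.2 ^ 2 + p.2.1 ^ 2)) ∧
    (∀ p : ℝ × ℝ × ℝ, Real.sqrt (p.1 ^ 2 + p.2.1 ^ 2 + p.2.2 ^ 2) ≤ r →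
      p ≠ (0, 0, 0) → fderiv ℝ V p (f p) < 0) := by
  obtain rfl : f = kinematics kρ kα lam := funext hf
  obtain rfl : V = lyapunovCandidate ν lam P := funext fun p => by
    rw [hV, lyapunovCandidate, angles_apply]
  subst hA
  have hlM_pos : 0 < lM := hPpos.pos_of_mem_upperBounds_spectrum hlM.2
  have hν_pos : 0 < ν := by rw [hν]; positivity
  have hνkα : 2 * c ^ 2 * r ^ 2 * lM ^ 2 ≤ ν * kα := by rw [hν, div_mul_cancel₀ _ hkα.ne']
  have hderiv : ∀ p : ℝ × ℝ × ℝ, √(p.1 ^ 2 + p.2.1 ^ 2 + p.2.2 ^ 2) ≤ r →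
      fderiv ℝ (lyapunovCandidate ν lam P) p (kinematics kρ kα lam p)
        ≤ -ν * kρ * Real.cos p.2.2 ^ 2 * p.1 ^ 2 - 1 / 2 * (p.2.2 ^ 2 + p.2.1 ^ 2) := by
    rintro ⟨ρ, φ, α⟩ hp
    have hball : α ^ 2 + φ ^ 2 ≤ r ^ 2 := by nlinarith [(Real.sqrt_le_iff.mp hp).2]
    refine fderiv_lyapunovCandidate_kinematics_le hPpos.posSemidef hLyap hlM.2 hlM_pos hνkα ?_
    exact sincPerturbation_dotProduct_self_le hball
      (hKbound α φ (Real.sqrt_le_iff.mpr ⟨hr.le, hball⟩))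
  refine ⟨⟨by simp [lyapunovCandidate], fun p hp => ?_⟩, hderiv, fun p hp hne => ?_⟩
  · exact lyapunovCandidate_pos hν_pos hlam hPpos.posSemidef hp
  · exact (hderiv p hp).trans_lt (neg_mul_cos_sq_sub_half_neg hν_pos hkρ hne)

/-- The function `V(ρ, φ, α) = ν ½(ρ² + λφ² + α²) + (α,φ)ᵀP(α,φ)` with
`ν = 2c²r²λ_M(P)²/k_α` is a strict Lyapunov function for the nominal
closed-loop kinematics on the ball `B_r`: it is positive definite and its
derivative along `f` satisfies
`∇V · f ≤ -ν k_ρ cos²(α) ρ² - ½‖(α,φ)‖²` on `B_r`, hence is negative definite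
on `B_r`. Coordinates: `p = (ρ, φ, α)`. -/
theorem strict_Lyapunov_kinematics
    (kρ kα lam : ℝ) (hkρ : 0 < kρ) (hkα : 0 < kα) (hlam : 0 < lam)
    (f : ℝ × ℝ × ℝ → ℝ × ℝ × ℝ)
    (hf : ∀ p : ℝ × ℝ × ℝ,
      f p = (-kρ * Real.cos p.2.2 ^ 2 * p.1,
             -kρ * _root_.sinc (2 * p.2.2) * p.2.2,
             -kα * p.2.2 + lam * kρ * _root_.sinc (2 * p.2.2) * p.2.1))
    (A : Matrix (Fin 2) (Fin 2) ℝ)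
    (hA : A = Matrix.of ![![-kα, lam * kρ], ![-kρ, 0]])
    (P : Matrix (Fin 2) (Fin 2) ℝ)
    (hPsymm : P.IsSymm) (hPpos : P.PosDef)
    (hLyap : Aᵀ * P + P * A = -(1 : Matrix (Fin 2) (Fin 2) ℝ))
    (lM : ℝ) (hlM : IsGreatest (spectrum ℝ P) lM)
    (r c : ℝ) (hr : 0 < r) (hc : 0 < c)
    (hKbound : ∀ α φ : ℝ, Real.sqrt (α ^ 2 + φ ^ 2) ≤ r →
      Real.sqrt ((-lam * kρ * (1 - _root_.sinc (2 * α)) * φ) ^ 2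
          + (kρ * (1 - _root_.sinc (2 * α)) * α) ^ 2)
        ≤ c * Real.sqrt (α ^ 2 + φ ^ 2) * |α|)
    (ν : ℝ) (hν : ν = 2 * c ^ 2 * r ^ 2 * lM ^ 2 / kα)
    (V : ℝ × ℝ × ℝ → ℝ)
    (hV : ∀ p : ℝ × ℝ × ℝ,
      V p = ν * ((p.1 ^ 2 + lam * p.2.1 ^ 2 + p.2.2 ^ 2) / 2)
        + ![p.2.2, p.2.1] ⬝ᵥ P.mulVec ![p.2.2, p.2.1]) :
    (V (0, 0, 0) = 0 ∧ ∀ p : ℝ × ℝ × ℝ, p ≠ (0, 0, 0) → 0 < V p) ∧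
    (∀ p : ℝ × ℝ × ℝ, Real.sqrt (p.1 ^ 2 + p.2.1 ^ 2 + p.2.2 ^ 2) ≤ r →
      fderiv ℝ V p (f p)
        ≤ -ν * kρ * Real.cos p.2.2 ^ 2 * p.1 ^ 2
          - (1 / 2) * (p.2.2 ^ 2 + p.2.1 ^ 2)) ∧
    (∀ p : ℝ × ℝ × ℝ, Real.sqrt (p.1 ^ 2 + p.2.1 ^ 2 + p.2.2 ^ 2) ≤ r →
      p ≠ (0, 0, 0) → fderiv ℝ V p (f p) < 0) :=
  strict_Lyapunov_kinematics_general kρ kα lam hkρ hkα hlam f hf A hA P hPpos hLyap lM hlM r c hr hc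
    hKbound ν hν V hV
end
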